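/- Let k be an odd integer with k ≥ 9 and let d = (3k+5)/2. Then K(d,k) = 4k+8, i.e., the maximum length of a d-dimensional circuit code of spread k is 4k+8. -/

import Mathlib

/-- The graph of the `d`-dimensional hypercube: vertices are binary vectors of
length `d`, adjacent iff they differ in exactly one coordinate. -/
def hypercube (d : ℕ) : SimpleGraph (Fin d → Bool) where
  Adj x y := hammingDist x y = 1
  symm := by
    constructor
    intro x y h
    rwa [hammingDist_comm]
  loopless := by
    constructor
    intro x h
    simp [hammingDist_self] at h

/-- Distance along a cycle of length `N` between positions `i` and `j`. -/
def cycDist {N : ℕ} (i j : ZMod N) : ℕ := min (i - j).val (j - i).val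

/-- `x : ZMod N → (Fin d → Bool)` is a `(d,k)` circuit code of length `N`:
a cycle in the hypercube `I(d)` satisfying the spread-`k` distance requirement. -/
structure IsCircuitCode (d k N : ℕ) (x : ZMod N → Fin d → Bool) : Prop where
  inj : Function.Injective x
  adj : ∀ i : ZMod N, (hypercube d).Adj (x i) (x (i + 1))
  spread : ∀ i j : ZMod N, min (cycDist i j) k ≤ (hypercube d).dist (x i) (x j)

/-- `τ` is the transition sequence of the cycle `x`: `τ i` is the unique
coordinate in which `x i` and `x (i+1)` differ. -/
def IsTransitionSeq {d N : ℕ} (x : ZMod N → Fin d → Bool) (τ : ZMod N → Fin d) : Prop :=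
  ∀ (i : ZMod N) (j : Fin d), x (i + 1) j ≠ x i j ↔ j = τ i

/-- The segment of `τ` of length `m` starting at position `start` is a bit run:
all of its entries are distinct. -/
def IsBitRun {d N : ℕ} (τ : ZMod N → Fin d) (start : ZMod N) (m : ℕ) : Prop :=
  ∀ a b : Fin m, τ (start + ((a : ℕ) : ZMod N)) = τ (start + ((b : ℕ) : ZMod N)) → a = b

/-- `δ(ω)`: the number of coordinates appearing an odd number of times in the
segment of `τ` of length `m` starting at `start`. -/
def segDelta {d N : ℕ} (τ : ZMod N → Fin d) (start : ZMod N) (m : ℕ) : ℕ :=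
  (Finset.univ.filter fun c : Fin d =>
    Odd (Finset.univ.filter fun t : Fin m => τ (start + ((t : ℕ) : ZMod N)) = c).card).card

/-!
Along a cycle with transition sequence `τ`, the distance from `x i` to `x (i + m)` is the number
of coordinates occurring an odd number of times among `τ i, …, τ (i + m - 1)`; in particular it
has the parity of `m`.

Upper bound. As `k` is odd, two words at an even offset `m` with `k ≤ m ≤ N - k` are at distance
at least `k + 1`; so every window of `k + 1` transitions is a bit run, and Plotkin's bound for the
five words `x (j (k + 1))`, `j < 5`, excludes `N ≥ 4k + 11`. Codes have even length, and for
`N = 4k + 10` every window of `2k + 2` transitions is two bit runs: each coordinate occurs in it at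
most twice, and at most `(k + 1) / 2` coordinates twice. Double counting pairs (window, coordinate
occurring twice in it) against the even multiplicities of the `(3k + 5) / 2` coordinates in a full
period then forces `k ≤ 5`.

Lower bound. With `K = k + 2`, the transition sequence `blockSeq K` has period `2K`, and within
distance `< 2K` it repeats a symbol only at distance exactly `K`, from a position whose residue
mod `K` is even. Windows of length `t ≤ K` are therefore bit runs, while in a window of length
`K + u ≤ 2K` at most `u / 2 + 1` coordinates occur twice, which leaves at least `K - 2 = k`
coordinates occurring once. The code is the walk from the zero vector along this sequence, which
closes up after `4K` steps, twice the period.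
-/

open Finset

section Hypercube

variable {d : ℕ}

theorem hammingDist_le_length {x y : Fin d → Bool} (w : (hypercube d).Walk x y) :
    hammingDist x y ≤ w.length := by
  induction w with
  | nil => simp
  | @cons u v z h w ih =>
    calc hammingDist u z ≤ hammingDist u v + hammingDist v z := hammingDist_triangle _ _ _
      _ ≤ w.length + 1 := by rw [show hammingDist u v = 1 from h]; omega

theorem exists_walk_length_eq_hammingDist (x y : Fin d → Bool) :
    ∃ w : (hypercube d).Walk x y, w.length = hammingDist x y := by
  induction h : hammingDist x y generalizing x with
  | zero => rw [hammingDist_eq_zero.mp h]; exact ⟨.nil, rfl⟩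
  | succ n ih =>
    obtain ⟨c, hc⟩ : ∃ c, x c ≠ y c := Function.ne_iff.mp (hammingDist_pos.mp (by omega))
    set x' := Function.update x c (y c)
    have hxx' : ({i | x i ≠ x' i} : Finset (Fin d)) = {c} := by
      ext i; by_cases hi : i = c <;> simp [x', hi, hc]
    have hx'y : ({i | x' i ≠ y i} : Finset (Fin d)) = ({i | x i ≠ y i} : Finset _).erase c := by
      ext i; by_cases hi : i = c <;> simp [x', hi]
    have hadj : (hypercube d).Adj x x' := by
      show #{i | x i ≠ x' i} = 1
      rw [hxx', card_singleton]
    obtain ⟨w, hw⟩ := ih x' (by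
      change #{i | x' i ≠ y i} = n
      rw [hx'y, card_erase_of_mem (by simpa using hc)]
      change hammingDist x y - 1 = n
      omega)
    exact ⟨.cons hadj w, by simp [hw]⟩

theorem hypercube_dist (x y : Fin d → Bool) : (hypercube d).dist x y = hammingDist x y := by
  obtain ⟨w, hw⟩ := exists_walk_length_eq_hammingDist x y
  obtain ⟨p, hp⟩ := w.reachable.exists_walk_length_eq_dist
  exact le_antisymm (hw ▸ SimpleGraph.dist_le w) (hp ▸ hammingDist_le_length p)

end Hypercube

section SegmentCounts

variable {ι α : Type*} [AddMonoidWithOne ι] [DecidableEq α]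

def segCount (τ : ι → α) (s : ι) (m : ℕ) (c : α) : ℕ := #{j ∈ range m | τ (s + ((j : ℕ) : ι)) = c}

theorem segCount_add (τ : ι → α) (s : ι) (a b : ℕ) (c : α) :
    segCount τ s (a + b) c = segCount τ s a c + segCount τ (s + a) b c := by
  simp only [segCount, card_filter, sum_range_add, Nat.cast_add, add_assoc]

theorem segCount_succ (τ : ι → α) (s : ι) (m : ℕ) (c : α) :
    segCount τ s (m + 1) c = segCount τ s m c + if τ (s + m) = c then 1 else 0 := by
  rw [segCount_add]
  by_cases h : τ (s + m) = c <;> simp [segCount, filter_singleton, h]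

theorem sum_segCount [Fintype α] (τ : ι → α) (s : ι) (m : ℕ) : ∑ c, segCount τ s m c = m := by
  simp only [segCount]
  rw [← card_eq_sum_card_fiberwise (fun _ _ => mem_univ _), card_range]

end SegmentCounts

theorem card_filter_odd_mod_two {ι : Type*} [Fintype ι] (n : ι → ℕ) :
    #{i | Odd (n i)} % 2 = (∑ i, n i) % 2 := by
  rw [card_filter, sum_nat_mod, sum_nat_mod _ _ n]
  refine congrArg (· % 2) (sum_congr rfl fun i _ => ?_)
  rcases Nat.even_or_odd (n i) with h | h
  · rw [if_neg (Nat.not_odd_iff_even.mpr h), Nat.even_iff.mp h]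
  · rw [if_pos h, Nat.odd_iff.mp h]

theorem card_filter_odd_add_two_mul_card_filter_eq_two {ι : Type*} [Fintype ι] (n : ι → ℕ)
    (h : ∀ i, n i ≤ 2) : #{i | Odd (n i)} + 2 * #{i | n i = 2} = ∑ i, n i := by
  rw [card_filter, card_filter, mul_sum, ← sum_add_distrib]
  refine sum_congr rfl fun i _ => ?_
  rcases (by have := h i; omega : n i = 0 ∨ n i = 1 ∨ n i = 2) with h | h | h <;> simp [h]

section CyclicCounts

variable {α : Type*} [DecidableEq α] {N : ℕ} [NeZero N]

theorem segCount_eq_card_filter (τ : ZMod N → α) (s : ZMod N) (c : α) :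
    segCount τ s N c = #{p | τ p = c} := by
  apply card_nbij (fun j : ℕ => s + j)
  · intro j hj
    simpa using (mem_filter.mp hj).2
  · intro j hj j' hj' h
    simp only [coe_filter, mem_range, Set.mem_ofPred_eq] at hj hj'
    simpa [ZMod.val_natCast_of_lt hj.1, ZMod.val_natCast_of_lt hj'.1] using
      congrArg ZMod.val (add_left_cancel h)
  · intro p hp
    exact ⟨(p - s).val, by simpa [ZMod.val_lt] using hp, by simp⟩

theorem sum_segCount_eq_mul (τ : ZMod N → α) (m : ℕ) (c : α) :
    ∑ i, segCount τ i m c = m * segCount τ 0 N c := by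
  have hshift (j : ℕ) : ∑ i : ZMod N, (if τ (i + j) = c then 1 else 0) =
      ∑ p, if τ p = c then 1 else 0 :=
    Fintype.sum_equiv (Equiv.addRight (j : ZMod N)) _ _ fun _ => rfl
  rw [segCount_eq_card_filter, card_filter]
  simp only [segCount, card_filter]
  rw [sum_comm]
  simp [hshift]

theorem mul_segCount_le_add_card (τ : ZMod N → α) {L : ℕ} {c : α}
    (h : ∀ i, segCount τ i L c ≤ 2) :
    L * segCount τ 0 N c ≤ N + #{i | segCount τ i L c = 2} := by
  rw [← sum_segCount_eq_mul, card_filter]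
  calc ∑ i, segCount τ i L c ≤ ∑ i : ZMod N, (1 + if segCount τ i L c = 2 then 1 else 0) :=
        sum_le_sum fun i _ => by have := h i; split_ifs <;> omega
    _ = N + ∑ i, if segCount τ i L c = 2 then 1 else 0 := by simp [sum_add_distrib]

theorem segCount_comp_val {f : ℕ → α} (hf : Function.Periodic f N) (s : ZMod N)
    (m : ℕ) (c : α) : segCount (fun i : ZMod N => f i.val) s m c = segCount f s.val m c := by
  simp only [segCount, Nat.cast_id, ZMod.val_add, ZMod.val_natCast, Nat.add_mod_mod,
    hf.map_mod_nat]

end CyclicCounts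

section Periodic

variable {α : Type*} [DecidableEq α] {f : ℕ → α} {P : ℕ}

theorem segCount_add_period (hf : Function.Periodic f P) (s m : ℕ) (c : α) :
    segCount f (s + P) m c = segCount f s m c := by
  simp only [segCount, Nat.cast_id, add_right_comm s P, hf _]

theorem even_segCount_two_mul (hf : Function.Periodic f P) (s : ℕ) (c : α) :
    Even (segCount f s (2 * P) c) := by
  rw [two_mul, segCount_add, Nat.cast_id, segCount_add_period hf]
  exact ⟨_, rfl⟩

end Periodic

section TransitionSeq

variable {d N : ℕ} {x : ZMod N → Fin d → Bool} {τ : ZMod N → Fin d}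

theorem exists_isTransitionSeq (hx : ∀ i, (hypercube d).Adj (x i) (x (i + 1))) :
    ∃ τ, IsTransitionSeq x τ := by
  have (i : ZMod N) : ∃ c, ∀ j, x (i + 1) j ≠ x i j ↔ j = c := by
    obtain ⟨c, hc⟩ := card_eq_one.mp (hx i)
    exact ⟨c, fun j => by simpa [ne_comm] using Finset.ext_iff.mp hc j⟩
  choose τ hτ using this
  exact ⟨τ, hτ⟩

theorem IsTransitionSeq.adj (hτ : IsTransitionSeq x τ) (i : ZMod N) :
    (hypercube d).Adj (x i) (x (i + 1)) := by
  show #{j | x i j ≠ x (i + 1) j} = 1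
  rw [card_eq_one]
  exact ⟨τ i, by ext j; rw [mem_filter, ne_comm, hτ i j]; simp⟩

theorem IsTransitionSeq.ne_iff_odd_segCount (hτ : IsTransitionSeq x τ) (s : ZMod N) (m : ℕ)
    (c : Fin d) : x (s + m) c ≠ x s c ↔ Odd (segCount τ s m c) := by
  induction m with
  | zero => simp [segCount]
  | succ m ih =>
    have hstep := hτ (s + m) c
    rw [Nat.cast_succ, ← add_assoc, segCount_succ]
    by_cases hc : τ (s + m) = c
    · rw [if_pos hc, Nat.odd_add_one, ← ih]
      have hbool : ∀ a b e : Bool, a ≠ b → (a ≠ e ↔ ¬b ≠ e) := by decide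
      exact hbool _ _ _ (hstep.mpr hc.symm)
    · rw [if_neg hc, add_zero, ← ih, not_ne_iff.mp (mt hstep.mp (Ne.symm hc))]

theorem IsTransitionSeq.hammingDist_eq (hτ : IsTransitionSeq x τ) (s : ZMod N) (m : ℕ) :
    hammingDist (x s) (x (s + m)) = #{c | Odd (segCount τ s m c)} := by
  simp_rw [← hτ.ne_iff_odd_segCount, ne_comm]
  rfl

theorem IsTransitionSeq.even_segCount (hτ : IsTransitionSeq x τ) (s : ZMod N) (c : Fin d) :
    Even (segCount τ s N c) := by
  have h := hτ.hammingDist_eq s N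
  rw [ZMod.natCast_self, add_zero, hammingDist_self, eq_comm, card_eq_zero,
    filter_eq_empty_iff] at h
  exact Nat.not_odd_iff_even.mp (h (mem_univ c))

end TransitionSeq

section ParityCode

variable {α : Type*} [DecidableEq α] {N : ℕ}

def parityCode (τ : ZMod N → α) (i : ZMod N) (c : α) : Bool := decide (Odd (segCount τ 0 i.val c))

theorem isTransitionSeq_parityCode [NeZero N] {d : ℕ} (τ : ZMod N → Fin d)
    (h : ∀ c, Even (segCount τ 0 N c)) : IsTransitionSeq (parityCode τ) τ := by
  intro i c
  have hsucc := segCount_succ τ 0 i.val c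
  rw [zero_add, ZMod.natCast_zmod_val] at hsucc
  have hval : (i + 1).val = (i.val + 1) % N := by
    rw [ZMod.val_add, ZMod.val_one_eq_one_mod, Nat.add_mod_mod]
  have hodd : Odd (segCount τ 0 (i + 1).val c) ↔ Odd (segCount τ 0 (i.val + 1) c) := by
    rcases (by have := ZMod.val_lt i; omega : i.val + 1 < N ∨ i.val + 1 = N) with hi | hi
    · rw [hval, Nat.mod_eq_of_lt hi]
    · rw [hval, hi, Nat.mod_self, ← Nat.not_even_iff_odd, ← Nat.not_even_iff_odd]
      simpa [segCount] using h c
  simp only [parityCode, ne_eq, decide_eq_decide, hodd, hsucc]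
  by_cases hc : τ i = c
  · simp only [hc, if_true, Nat.odd_add_one]
    exact iff_true_intro not_iff_self
  · simp [hc, Ne.symm hc]

end ParityCode

section BitRuns

variable {d N : ℕ} {τ : ZMod N → Fin d}

theorem isBitRun_of_le_card_odd {s : ZMod N} {m : ℕ}
    (h : m ≤ #{c | Odd (segCount τ s m c)}) : IsBitRun τ s m := by
  intro a b hab
  have hsub : ({c | Odd (segCount τ s m c)} : Finset (Fin d)) ⊆
      (range m).image fun j : ℕ => τ (s + j) := by
    intro c hc
    obtain ⟨j, hj⟩ := card_pos.mp (mem_filter.mp hc).2.pos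
    rw [mem_filter] at hj
    exact mem_image.mpr ⟨j, hj⟩
  have hinj : Set.InjOn (fun j : ℕ => τ (s + j)) (range m) := card_image_iff.mp <|
    le_antisymm card_image_le ((card_range m).symm ▸ h.trans (card_le_card hsub))
  exact Fin.ext (hinj (by simp) (by simp) hab)

theorem IsBitRun.segCount_le_one {s : ZMod N} {m : ℕ} (h : IsBitRun τ s m) (c : Fin d) :
    segCount τ s m c ≤ 1 := by
  refine card_le_one.mpr fun a ha b hb => ?_
  simp only [mem_filter, mem_range] at ha hb
  exact congrArg Fin.val (h ⟨a, ha.1⟩ ⟨b, hb.1⟩ (ha.2.trans hb.2.symm))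

end BitRuns

section CircuitCode

variable {d k N : ℕ} {x : ZMod N → Fin d → Bool} {τ : ZMod N → Fin d}

theorem cycDist_comm (i j : ZMod N) : cycDist i j = cycDist j i := min_comm _ _

theorem cycDist_add_natCast [NeZero N] (i : ZMod N) {m : ℕ} (hm : m < N) :
    cycDist i (i + m) = min (N - m) m := by
  rw [cycDist, sub_add_cancel_left, add_sub_cancel_left, ZMod.neg_val,
    ZMod.val_natCast_of_lt hm]
  split_ifs with h
  · obtain rfl : m = 0 := Nat.eq_zero_of_dvd_of_lt ((ZMod.natCast_eq_zero_iff _ _).mp h) hm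
    simp
  · rfl

theorem IsCircuitCode.min_le_hammingDist (hc : IsCircuitCode d k N x) (i : ZMod N) {m : ℕ}
    (hm : m < N) : min (min (N - m) m) k ≤ hammingDist (x i) (x (i + m)) := by
  have : NeZero N := ⟨by omega⟩
  simpa [cycDist_add_natCast i hm, hypercube_dist] using hc.spread i (i + m)

theorem IsCircuitCode.hammingDist_mod_two (hc : IsCircuitCode d k N x) (i : ZMod N) (m : ℕ) :
    hammingDist (x i) (x (i + m)) % 2 = m % 2 := by
  obtain ⟨τ, hτ⟩ := exists_isTransitionSeq hc.adj
  rw [hτ.hammingDist_eq, card_filter_odd_mod_two, sum_segCount]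

theorem IsCircuitCode.even_length (hc : IsCircuitCode d k N x) : Even N := by
  have := hc.hammingDist_mod_two 0 N
  rw [ZMod.natCast_self, add_zero, hammingDist_self] at this
  exact Nat.even_iff.mpr this.symm

theorem IsCircuitCode.succ_le_hammingDist (hc : IsCircuitCode d k N x) (hk : Odd k)
    (i : ZMod N) {m : ℕ} (hm : Even m) (hkm : k ≤ m) (hmN : m + k ≤ N) :
    k + 1 ≤ hammingDist (x i) (x (i + m)) := by
  have hk1 := hk.pos
  have hlow := hc.min_le_hammingDist i (m := m) (by omega)
  have hpar := hc.hammingDist_mod_two i m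
  rw [Nat.odd_iff] at hk
  rw [Nat.even_iff] at hm
  omega

theorem IsTransitionSeq.isCircuitCode [NeZero N] (hτ : IsTransitionSeq x τ) (hk : 0 < k)
    (h : ∀ s t, t ≤ N - t → min t k ≤ #{c | Odd (segCount τ s t c)}) :
    IsCircuitCode d k N x := by
  have hspread (i j : ZMod N) : min (cycDist i j) k ≤ hammingDist (x i) (x j) := by
    wlog hle : (j - i).val ≤ (i - j).val generalizing i j
    · rw [cycDist_comm, hammingDist_comm]; exact this j i (by omega)
    have hsym : (j - i).val ≤ N - (j - i).val := by
      rw [← neg_sub j i, ZMod.neg_val] at hle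
      split_ifs at hle with h0
      · simp [h0]
      · exact hle
    have hj : j = i + ((j - i).val : ZMod N) := by simp
    rw [cycDist, min_eq_right hle, hj, hτ.hammingDist_eq, ← hj]
    exact h i _ hsym
  refine ⟨fun i j hij => ?_, hτ.adj, fun i j => hypercube_dist (x i) (x j) ▸ hspread i j⟩
  have h0 := hspread i j
  rw [hij, hammingDist_self, cycDist] at h0
  rcases (by omega : (i - j).val = 0 ∨ (j - i).val = 0) with h0 | h0
  · exact sub_eq_zero.mp ((ZMod.val_eq_zero _).mp h0)
  · exact (sub_eq_zero.mp ((ZMod.val_eq_zero _).mp h0)).symm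

end CircuitCode

theorem sum_pairwise_hammingDist_five_le {d : ℕ} (y₀ y₁ y₂ y₃ y₄ : Fin d → Bool) :
    hammingDist y₀ y₁ + hammingDist y₀ y₂ + hammingDist y₀ y₃ + hammingDist y₀ y₄ +
      hammingDist y₁ y₂ + hammingDist y₁ y₃ + hammingDist y₁ y₄ + hammingDist y₂ y₃ +
      hammingDist y₂ y₄ + hammingDist y₃ y₄ ≤ 6 * d := by
  have hcoord : ∀ b₀ b₁ b₂ b₃ b₄ : Bool,
      (if b₀ ≠ b₁ then 1 else 0) + (if b₀ ≠ b₂ then 1 else 0) + (if b₀ ≠ b₃ then 1 else 0) +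
        (if b₀ ≠ b₄ then 1 else 0) + (if b₁ ≠ b₂ then 1 else 0) + (if b₁ ≠ b₃ then 1 else 0) +
        (if b₁ ≠ b₄ then 1 else 0) + (if b₂ ≠ b₃ then 1 else 0) + (if b₂ ≠ b₄ then 1 else 0) +
        (if b₃ ≠ b₄ then 1 else 0) ≤ 6 := by
    decide
  simp only [hammingDist, card_filter, ← sum_add_distrib]
  calc _ ≤ ∑ _c : Fin d, 6 := sum_le_sum fun c _ => hcoord _ _ _ _ _
    _ = 6 * d := by simp [mul_comm]

section UpperBound

variable {d k N : ℕ} {x : ZMod N → Fin d → Bool} {τ : ZMod N → Fin d}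

/-- Plotkin's bound for the five words `x (i + j (k + 1))`, `j < 5`, nine of whose ten distances
are at least `k + 1`. -/
theorem IsCircuitCode.five_point_bound (hc : IsCircuitCode d k N x) (hk : Odd k)
    (hN : 4 * k + 3 ≤ N) (i : ZMod N) :
    hammingDist (x i) (x (i + (4 * (k + 1) : ℕ))) + 9 * (k + 1) ≤ 6 * d := by
  set y : ℕ → Fin d → Bool := fun a => x (i + (a * (k + 1) : ℕ))
  have hpair (a b : ℕ) (hab : a < b) (hb : b ≤ a + 3) : k + 1 ≤ hammingDist (y a) (y b) := by
    obtain ⟨e, rfl⟩ : ∃ e, b = a + e := ⟨b - a, by omega⟩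
    have hy : y (a + e) = x (i + (a * (k + 1) : ℕ) + (e * (k + 1) : ℕ)) := by
      simp only [y, add_mul, Nat.cast_add, add_assoc]
    rw [hy]
    refine hc.succ_le_hammingDist hk _ (hk.add_one.mul_left e) ?_ ?_
    · nlinarith
    · nlinarith
  have h0 : x i = y 0 := by simp [y]
  rw [h0]
  have := sum_pairwise_hammingDist_five_le (y 0) (y 1) (y 2) (y 3) (y 4)
  have := hpair 0 1; have := hpair 0 2; have := hpair 0 3; have := hpair 1 2; have := hpair 1 3
  have := hpair 1 4; have := hpair 2 3; have := hpair 2 4; have := hpair 3 4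
  change hammingDist (y 0) (y 4) + _ ≤ _
  omega

theorem IsCircuitCode.length_le_four_mul_add_ten (hc : IsCircuitCode d k N x) (hk : Odd k)
    (hk7 : 7 ≤ k) (hd : 2 * d = 3 * k + 5) : N ≤ 4 * k + 10 := by
  by_contra! hN
  have hplotkin := hc.five_point_bound hk (by omega) 0
  have hfar := hc.min_le_hammingDist 0 (m := 4 * (k + 1)) (by omega)
  omega

theorem IsCircuitCode.isBitRun (hc : IsCircuitCode d k N x) (hk : Odd k) (hN : 2 * k + 1 ≤ N)
    (hτ : IsTransitionSeq x τ) (i : ZMod N) : IsBitRun τ i (k + 1) := by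
  apply isBitRun_of_le_card_odd
  rw [← hτ.hammingDist_eq]
  exact hc.succ_le_hammingDist hk i hk.add_one (by omega) (by omega)

theorem IsCircuitCode.segCount_le_two (hc : IsCircuitCode d k N x) (hk : Odd k)
    (hN : 2 * k + 1 ≤ N) (hτ : IsTransitionSeq x τ) (i : ZMod N) (c : Fin d) :
    segCount τ i (2 * (k + 1)) c ≤ 2 := by
  rw [two_mul, segCount_add]
  have := (hc.isBitRun hk hN hτ i).segCount_le_one c
  have := (hc.isBitRun hk hN hτ (i + (k + 1 : ℕ))).segCount_le_one c
  omega

/-- A window of length `2k + 2` contains at most `(k + 1) / 2` coordinates twice, while a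
coordinate occurring `r` times in the cycle occurs twice in at least `(2k + 2) r - N` windows. As
every `r` is even and they sum to `N = 4k + 10` over `(3k + 5) / 2` coordinates, the second count
exceeds the first. -/
theorem IsCircuitCode.length_ne (hc : IsCircuitCode d k N x) (hk : Odd k) (hk6 : 6 ≤ k)
    (hd : 2 * d = 3 * k + 5) : N ≠ 4 * k + 10 := by
  intro hN
  have : NeZero N := ⟨by omega⟩
  obtain ⟨τ, hτ⟩ := exists_isTransitionSeq hc.adj
  have hn2 := hc.segCount_le_two hk (by omega) hτ
  set L := 2 * (k + 1)
  set r : Fin d → ℕ := fun c => segCount τ 0 N c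
  set A : Fin d → ℕ := fun c => #{i | segCount τ i L c = 2}
  have hwindow (i : ZMod N) : 2 * #{c | segCount τ i L c = 2} ≤ k + 1 := by
    have hsplit := card_filter_odd_add_two_mul_card_filter_eq_two _ (hn2 i)
    have hfar := hc.succ_le_hammingDist hk i (m := L) (even_two_mul _) (by omega) (by omega)
    rw [hτ.hammingDist_eq] at hfar
    rw [sum_segCount] at hsplit
    omega
  -- `(2k - 1) (r c - 2) ≤ A c`, which holds because `r c` is even
  have hcoord (c : Fin d) : 2 * k * r c + 2 ≤ A c + 4 * k + r c := by
    have hmul := mul_segCount_le_add_card τ (L := L) (c := c) (hn2 · c)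
    obtain ⟨j, hj⟩ := hτ.even_segCount 0 c
    simp only [r, A, L, hj] at hmul ⊢
    rcases (by omega : j = 0 ∨ j = 1 ∨ 2 ≤ j) with rfl | rfl | hj2 <;> nlinarith
  have hdouble : ∑ i, #{c | segCount τ i L c = 2} = ∑ c, A c := by
    simp only [A, card_filter]
    exact sum_comm
  have hrows : 2 * ∑ c, A c ≤ N * (k + 1) := by
    rw [← hdouble, mul_sum]
    simpa using sum_le_sum fun i (_ : i ∈ univ) => hwindow i
  have hcols : 2 * k * N + 2 * d ≤ ∑ c, A c + 4 * k * d + N := by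
    have := sum_le_sum fun c (_ : c ∈ univ) => hcoord c
    simp only [sum_add_distrib, ← mul_sum, sum_const, card_univ, Fintype.card_fin,
      smul_eq_mul] at this
    rw [sum_segCount] at this
    linarith
  subst hN
  nlinarith

theorem IsCircuitCode.length_le (hc : IsCircuitCode d k N x) (hk : Odd k) (hk9 : 9 ≤ k)
    (hd : 2 * d = 3 * k + 5) : N ≤ 4 * k + 8 := by
  have h10 := hc.length_le_four_mul_add_ten hk (by omega) hd
  have hne := hc.length_ne hk (by omega) hd
  obtain ⟨j, hj⟩ := hc.even_length
  omega

end UpperBound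

/-- Since `K` is odd, `p % K` and `p + p / K` have the same parity, and `p + p / K` increases by
at most `u` along an interval of length `u ≤ K`. -/
theorem two_mul_card_filter_even_mod_le {K u : ℕ} (hK : Odd K) (hu : u ≤ K) (s : ℕ) :
    2 * #{p ∈ Ico s (s + u) | Even (p % K)} ≤ u + 2 := by
  have hpar (p : ℕ) : Even (p % K) ↔ (p + p / K) % 2 = 0 := by
    have : p + p / K = p % K + (K + 1) * (p / K) := by
      rw [add_mul, one_mul, ← add_assoc, Nat.mod_add_div]
    rw [← Nat.even_iff, this, Nat.even_add]
    simp [hK.add_one.mul_right]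
  have hdiv (p : ℕ) (hp : p ∈ Ico s (s + u)) : s / K ≤ p / K ∧ p / K ≤ s / K + 1 := by
    rw [mem_Ico] at hp
    refine ⟨Nat.div_le_div_right hp.1, ?_⟩
    calc p / K ≤ (s + K) / K := Nat.div_le_div_right (by omega)
      _ = s / K + 1 := Nat.add_div_right s hK.pos
  have hinj : #{p ∈ Ico s (s + u) | Even (p % K)} ≤ #(range (u / 2 + 1)) := by
    apply card_le_card_of_injOn (fun p => (p + p / K - (s + s / K)) / 2)
    · intro p hp
      obtain ⟨hp, -⟩ := mem_filter.mp hp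
      have := hdiv p hp
      rw [mem_Ico] at hp
      simp only [coe_range, Set.mem_Iio]
      omega
    · intro p hp p' hp' h
      obtain ⟨hp, hev⟩ := mem_filter.mp hp
      obtain ⟨hp', hev'⟩ := mem_filter.mp hp'
      rw [hpar] at hev hev'
      have := hdiv p hp
      have := hdiv p' hp'
      rw [mem_Ico] at hp hp'
      simp only at h
      rcases le_total p p' with hle | hle
      · have := Nat.div_le_div_right (c := K) hle; omega
      · have := Nat.div_le_div_right (c := K) hle; omega
  simp only [card_range] at hinj
  omega

section Collisions

variable {α : Type*} [DecidableEq α] {f : ℕ → α} {K t : ℕ}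

theorem segCount_le_two_of_collisions
    (hcol : ∀ p p', f p = f p' → p < p' → p' < p + 2 * K → p' = p + K ∧ Even (p % K))
    (ht : t ≤ 2 * K) (s : ℕ) (c : α) : segCount f s t c ≤ 2 := by
  by_contra! h
  obtain ⟨a, ha, b, hb, e, he, hab, hae, hbe⟩ := two_lt_card.mp h
  simp only [mem_filter, mem_range, Nat.cast_id] at ha hb he
  have gap (j j' : ℕ) (hj : j < t ∧ f (s + j) = c) (hj' : j' < t ∧ f (s + j') = c)
      (hne : j ≠ j') : j' = j + K ∨ j = j' + K := by
    rcases lt_or_gt_of_ne hne with hlt | hlt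
    · have := hcol _ _ (hj.2.trans hj'.2.symm) (by omega) (by omega); omega
    · have := hcol _ _ (hj'.2.trans hj.2.symm) (by omega) (by omega); omega
  have := gap a b ha hb hab
  have := gap a e ha he hae
  have := gap b e hb he hbe
  omega

theorem card_segCount_eq_two_le [Fintype α]
    (hcol : ∀ p p', f p = f p' → p < p' → p' < p + 2 * K → p' = p + K ∧ Even (p % K))
    (ht : t ≤ 2 * K) (s : ℕ) :
    #{c | segCount f s t c = 2} ≤ #{p ∈ Ico s (s + (t - K)) | Even (p % K)} := by
  refine (card_le_card fun c hc => ?_).trans (card_image_le (f := f))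
  obtain ⟨a, b, hab, hS⟩ := card_eq_two.mp (mem_filter.mp hc).2
  have ha : a < t ∧ f (s + a) = c := by simpa using (Finset.ext_iff.mp hS a).mpr (by simp)
  have hb : b < t ∧ f (s + b) = c := by simpa using (Finset.ext_iff.mp hS b).mpr (by simp)
  have first (j j' : ℕ) (hj : j < t ∧ f (s + j) = c) (hj' : j' < t ∧ f (s + j') = c)
      (hlt : j < j') : c ∈ image f {p ∈ Ico s (s + (t - K)) | Even (p % K)} := by
    obtain ⟨hgap, heven⟩ := hcol _ _ (hj.2.trans hj'.2.symm) (by omega) (by omega)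
    exact mem_image.mpr ⟨s + j, mem_filter.mpr ⟨mem_Ico.mpr ⟨by omega, by omega⟩, heven⟩, hj.2⟩
  rcases lt_or_gt_of_ne hab with h | h
  · exact first a b ha hb h
  · exact first b a hb ha h

theorem min_le_card_odd_segCount_of_collisions [Fintype α] (hK : Odd K)
    (hcol : ∀ p p', f p = f p' → p < p' → p' < p + 2 * K → p' = p + K ∧ Even (p % K))
    (ht : t ≤ 2 * K) (s : ℕ) : min t (K - 2) ≤ #{c | Odd (segCount f s t c)} := by
  have hsplit := card_filter_odd_add_two_mul_card_filter_eq_two _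
    (segCount_le_two_of_collisions hcol ht s)
  rw [sum_segCount] at hsplit
  have htwice := card_segCount_eq_two_le hcol ht s
  have heven := two_mul_card_filter_even_mod_le hK (u := t - K) (by omega) s
  have hcard : #{p ∈ Ico s (s + (t - K)) | Even (p % K)} ≤ t - K :=
    (card_filter_le _ _).trans (by simp)
  omega

end Collisions

/-- Transition sequence of the extremal code, in blocks of odd length `K`: the even residues `r`
carry coordinate `r / 2` in every block, the odd residues carry coordinates from two disjoint
sets of size `K / 2` used in alternate blocks. -/
def blockSeq (K p : ℕ) : ℕ :=
  if Even (p % K) then p % K / 2 else (K + 1) / 2 + p / K % 2 * (K / 2) + p % K / 2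

section BlockSeq

variable {K : ℕ}

theorem blockSeq_lt {d : ℕ} (hK : Odd K) (hd : 3 * K = 2 * d + 1) (p : ℕ) : blockSeq K p < d := by
  have hr := Nat.mod_lt p hK.pos
  have hK2 := Nat.odd_iff.mp hK
  unfold blockSeq
  split_ifs with h
  · omega
  · rw [Nat.even_iff] at h
    rcases Nat.mod_two_eq_zero_or_one (p / K) with hb | hb <;> rw [hb] <;> omega

theorem blockSeq_periodic (hK : 0 < K) : Function.Periodic (blockSeq K) (2 * K) := by
  intro p
  have hdiv : (p + K * 2) / K = p / K + 2 := by rw [mul_comm]; exact Nat.add_mul_div_right p 2 hK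
  simp only [blockSeq, mul_comm 2 K, Nat.add_mul_mod_self_left, hdiv, Nat.add_mod_right]

theorem blockSeq_collision (hK : Odd K) {p p' : ℕ} (h : blockSeq K p = blockSeq K p')
    (hlt : p < p') (hlt' : p' < p + 2 * K) : p' = p + K ∧ Even (p % K) := by
  have hdvd : p % K = p' % K → K ∣ p' - p := fun h => (Nat.modEq_iff_dvd' hlt.le).mp h
  have hshift : p % K = p' % K → p' = p + K := fun hr => by
    have := Nat.eq_of_dvd_of_lt_two_mul (by omega) (hdvd hr) (by omega)
    omega
  have hblock : p % K = p' % K → p / K % 2 ≠ p' / K % 2 := fun hr hb => by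
    have h2 : p % (K * 2) = p' % (K * 2) := by rw [Nat.mod_mul, Nat.mod_mul, hr, hb]
    have := Nat.eq_zero_of_dvd_of_lt ((Nat.modEq_iff_dvd' hlt.le).mp h2) (by omega)
    omega
  have hr := Nat.mod_lt p hK.pos
  have hr' := Nat.mod_lt p' hK.pos
  have hK2 := Nat.odd_iff.mp hK
  unfold blockSeq at h
  simp only [Nat.even_iff] at h ⊢
  split_ifs at h with he he' he'
  · exact ⟨hshift (by omega), he⟩
  · omega
  · omega
  · have hb := Nat.mod_lt (p / K) two_pos
    have hb' := Nat.mod_lt (p' / K) two_pos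
    interval_cases p / K % 2 <;> interval_cases p' / K % 2 <;> omega

theorem exists_isCircuitCode {k d : ℕ} (hk : Odd k) (hd : 2 * d = 3 * k + 5) :
    ∃ x : ZMod (4 * k + 8) → Fin d → Bool, IsCircuitCode d k (4 * k + 8) x := by
  have hK : Odd (k + 2) := hk.add_even even_two
  let f : ℕ → Fin d := fun p => ⟨blockSeq (k + 2) p, blockSeq_lt hK (by omega) p⟩
  have hf : Function.Periodic f (2 * (k + 2)) := fun p => Fin.ext (blockSeq_periodic hK.pos p)
  have hfN : Function.Periodic f (4 * k + 8) := by
    simpa [show 2 * (2 * (k + 2)) = 4 * k + 8 by ring] using hf.nat_mul 2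
  have hcol (p p' : ℕ) (h : f p = f p') : p < p' → p' < p + 2 * (k + 2) →
      p' = p + (k + 2) ∧ Even (p % (k + 2)) :=
    blockSeq_collision hK (Fin.val_eq_of_eq h)
  refine ⟨parityCode fun i => f i.val, (isTransitionSeq_parityCode _ fun c => ?_).isCircuitCode
    hk.pos fun s t ht => ?_⟩
  · rw [segCount_comp_val hfN, show 4 * k + 8 = 2 * (2 * (k + 2)) by ring]
    exact even_segCount_two_mul hf _ _
  · simp only [segCount_comp_val hfN]
    simpa using min_le_card_odd_segCount_of_collisions hK hcol (by omega : t ≤ 2 * (k + 2)) s.val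

/-- Douglas, Theorem 5: for odd `k ≥ 9` and `d = (3k+5)/2`,
the maximum length of a `(d,k)` circuit code is `K(d,k) = 4k+8`. -/
theorem stmt_3 (k d : ℕ) (hk : Odd k) (hk9 : 9 ≤ k) (hd : 2 * d = 3 * k + 5) :
    (∃ x : ZMod (4 * k + 8) → Fin d → Bool, IsCircuitCode d k (4 * k + 8) x) ∧
      ∀ (N : ℕ) (x : ZMod N → Fin d → Bool), IsCircuitCode d k N x → N ≤ 4 * k + 8 :=
  ⟨exists_isCircuitCode hk hd, fun _ _ hc => hc.length_le hk hk9 hd⟩
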